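/- The Hirota map T(x,y,z) = (xy/(x+z), x+z, yz/(x+z)) on ℂ³ satisfies the functional tetrahedron equation T^{123} ∘ T^{145} ∘ T^{246} ∘ T^{356} = T^{356} ∘ T^{246} ∘ T^{145} ∘ T^{123}, wherever all denominators are nonzero. -/

import Mathlib

/-- The Hirota tetrahedron map `T(x,y,z) = (xy/(x+z), x+z, yz/(x+z))`. -/
noncomputable def hirotaT : ℂ × ℂ × ℂ → ℂ × ℂ × ℂ :=
  fun (x, y, z) => (x * y / (x + z), x + z, y * z / (x + z))

/-- The denominator occurring in the Hirota map is nonzero. -/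
def hirotaOk : ℂ × ℂ × ℂ → Prop :=
  fun (x, _y, z) => x + z ≠ 0

section Lifts
variable (T : ℂ × ℂ × ℂ → ℂ × ℂ × ℂ)

/-- `T` acting on coordinates 1,2,3 of a 6-tuple. -/
def lift123 : ℂ × ℂ × ℂ × ℂ × ℂ × ℂ → ℂ × ℂ × ℂ × ℂ × ℂ × ℂ :=
  fun (a, b, c, d, e, f) =>
    let t := T (a, b, c); (t.1, t.2.1, t.2.2, d, e, f)

/-- `T` acting on coordinates 1,4,5 of a 6-tuple. -/
def lift145 : ℂ × ℂ × ℂ × ℂ × ℂ × ℂ → ℂ × ℂ × ℂ × ℂ × ℂ × ℂ :=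
  fun (a, b, c, d, e, f) =>
    let t := T (a, d, e); (t.1, b, c, t.2.1, t.2.2, f)

/-- `T` acting on coordinates 2,4,6 of a 6-tuple. -/
def lift246 : ℂ × ℂ × ℂ × ℂ × ℂ × ℂ → ℂ × ℂ × ℂ × ℂ × ℂ × ℂ :=
  fun (a, b, c, d, e, f) =>
    let t := T (b, d, f); (a, t.1, c, t.2.1, e, t.2.2)

/-- `T` acting on coordinates 3,5,6 of a 6-tuple. -/
def lift356 : ℂ × ℂ × ℂ × ℂ × ℂ × ℂ → ℂ × ℂ × ℂ × ℂ × ℂ × ℂ :=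
  fun (a, b, c, d, e, f) =>
    let t := T (c, e, f); (a, b, t.1, d, t.2.1, t.2.2)

end Lifts

/-- Projection on coordinates 1,2,3. -/
def proj123 : ℂ × ℂ × ℂ × ℂ × ℂ × ℂ → ℂ × ℂ × ℂ :=
  fun (a, b, c, _, _, _) => (a, b, c)

/-- Projection on coordinates 1,4,5. -/
def proj145 : ℂ × ℂ × ℂ × ℂ × ℂ × ℂ → ℂ × ℂ × ℂ :=
  fun (a, _, _, d, e, _) => (a, d, e)

/-- Projection on coordinates 2,4,6. -/
def proj246 : ℂ × ℂ × ℂ × ℂ × ℂ × ℂ → ℂ × ℂ × ℂ :=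
  fun (_, b, _, d, _, f) => (b, d, f)

/-- Projection on coordinates 3,5,6. -/
def proj356 : ℂ × ℂ × ℂ × ℂ × ℂ × ℂ → ℂ × ℂ × ℂ :=
  fun (_, _, c, _, e, f) => (c, e, f)

/-! Along the left-hand side the four denominators are `c + f`, `P / (c + f)`, `τ` and
`R / τ`; along the right-hand side they are `a + c`, `R / (a + c)`, `τ` and `P / τ`, where
`τ = a + c + f`, `P = b (c + f) + e f` and `R = a b + e (a + c)`. Once these collapse, both
composites visibly equal `(abd/R, R/τ, bcdeτ/(PR), τ, P/τ, def/P)`. -/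

noncomputable def hirotaTetrahedronImage :
    ℂ × ℂ × ℂ × ℂ × ℂ × ℂ → ℂ × ℂ × ℂ × ℂ × ℂ × ℂ :=
  fun (a, b, c, d, e, f) =>
    let P := b * (c + f) + e * f
    let R := a * b + e * (a + c)
    let τ := a + c + f
    (a * b * d / R, R / τ, b * c * d * e * τ / (P * R), τ, P / τ, d * e * f / P)

theorem lift123_lift145_lift246_lift356_hirotaT (a b c d e f : ℂ) (hσ : c + f ≠ 0)
    (hτ : a + c + f ≠ 0) (hP : b * (c + f) + e * f ≠ 0) (hR : a * b + e * (a + c) ≠ 0) :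
    lift123 hirotaT (lift145 hirotaT (lift246 hirotaT (lift356 hirotaT (a, b, c, d, e, f))))
      = hirotaTetrahedronImage (a, b, c, d, e, f) := by
  have denom123 : a * ((b * (c + f) + e * f) / (c + f)) / (a + (c + f)) + c * e / (c + f)
      = (a * b + e * (a + c)) / (a + c + f) := by
    rw [← add_assoc]
    field_simp
    ring
  simp only [lift123, lift145, lift246, lift356, hirotaT, hirotaTetrahedronImage,
    add_div' (e * f) b (c + f) hσ, denom123]
  simp only [← add_assoc, Prod.mk.injEq, true_and]
  -- Opaque `P` and `R` keep `field_simp` from expanding them and losing `hP`, `hR`.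
  generalize b * (c + f) + e * f = P at hP ⊢
  generalize a * b + e * (a + c) = R at hR ⊢
  refine ⟨?_, ?_, ?_, ?_⟩ <;> field_simp

theorem lift356_lift246_lift145_lift123_hirotaT (a b c d e f : ℂ) (hρ : a + c ≠ 0)
    (hτ : a + c + f ≠ 0) (hP : b * (c + f) + e * f ≠ 0) (hR : a * b + e * (a + c) ≠ 0) :
    lift356 hirotaT (lift246 hirotaT (lift145 hirotaT (lift123 hirotaT (a, b, c, d, e, f))))
      = hirotaTetrahedronImage (a, b, c, d, e, f) := by
  have denom356 : b * c / (a + c) + (a * b + e * (a + c)) / (a + c) * f / (a + c + f)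
      = (b * (c + f) + e * f) / (a + c + f) := by
    field_simp
    ring
  simp only [lift123, lift145, lift246, lift356, hirotaT, hirotaTetrahedronImage,
    div_add' (a * b) e (a + c) hρ, denom356, Prod.mk.injEq, true_and]
  generalize b * (c + f) + e * f = P at hP ⊢
  generalize a * b + e * (a + c) = R at hR ⊢
  refine ⟨?_, ?_, ?_, ?_⟩ <;> field_simp

theorem hirota_tetrahedron_general (p : ℂ × ℂ × ℂ × ℂ × ℂ × ℂ)
    (h1 : hirotaOk (proj356 p))
    (h2 : hirotaOk (proj246 (lift356 hirotaT p)))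
    (h5 : hirotaOk (proj123 p))
    (h6 : hirotaOk (proj145 (lift123 hirotaT p)))
    (h7 : hirotaOk (proj246 (lift145 hirotaT (lift123 hirotaT p)))) :
    lift123 hirotaT (lift145 hirotaT (lift246 hirotaT (lift356 hirotaT p)))
      = lift356 hirotaT (lift246 hirotaT (lift145 hirotaT (lift123 hirotaT p))) := by
  obtain ⟨a, b, c, d, e, f⟩ := p
  simp only [hirotaOk, hirotaT, lift123, lift145, lift356, proj123, proj145, proj246, proj356]
    at h1 h2 h5 h6 h7
  obtain ⟨hP, -⟩ := div_ne_zero_iff.mp (add_div' _ _ _ h1 ▸ h2)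
  obtain ⟨hR, -⟩ := div_ne_zero_iff.mp (div_add' _ _ _ h5 ▸ h6)
  rw [lift123_lift145_lift246_lift356_hirotaT a b c d e f h1 h7 hP hR,
    lift356_lift246_lift145_lift123_hirotaT a b c d e f h5 h7 hP hR]

/-- The Hirota map satisfies the functional tetrahedron equation,
wherever all denominators arising in both composed sides are nonzero. -/
theorem hirota_tetrahedron (p : ℂ × ℂ × ℂ × ℂ × ℂ × ℂ)
    (h1 : hirotaOk (proj356 p))
    (h2 : hirotaOk (proj246 (lift356 hirotaT p)))
    (h3 : hirotaOk (proj145 (lift246 hirotaT (lift356 hirotaT p))))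
    (h4 : hirotaOk (proj123 (lift145 hirotaT (lift246 hirotaT (lift356 hirotaT p)))))
    (h5 : hirotaOk (proj123 p))
    (h6 : hirotaOk (proj145 (lift123 hirotaT p)))
    (h7 : hirotaOk (proj246 (lift145 hirotaT (lift123 hirotaT p))))
    (h8 : hirotaOk (proj356 (lift246 hirotaT (lift145 hirotaT (lift123 hirotaT p))))) :
    lift123 hirotaT (lift145 hirotaT (lift246 hirotaT (lift356 hirotaT p)))
      = lift356 hirotaT (lift246 hirotaT (lift145 hirotaT (lift123 hirotaT p))) :=
  hirota_tetrahedron_general p h1 h2 h5 h6 h7
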